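/- arXiv:1910.14093 — 6 statements merged into one kernel-verified Lean document; each statement's English description precedes it below -/
import Mathlib

section
/- Let θ > 0 and c₁, c₂ ≥ 0. There exist constants C > 0 and h₀ ∈ (0,1], depending only on θ, c₁ and c₂, such that for every h ∈ (0, h₀] the following holds: if u, v ∈ ℝ³ satisfy ‖u‖ ≥ θh, and the difference w = v − u satisfies |⟨w, u⟩| / ‖u‖ ≤ c₂ h³ (component along u) and ‖w − (⟨w, u⟩/‖u‖²) u‖ ≤ c₁ h² (component orthogonal to u), then | ‖v‖ − ‖u‖ | ≤ C h³. -/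
/-!
Write `v = u + w` and split `w` into its component `a = ⟪w, u⟫ / ‖u‖` along `u` and its part `p`
orthogonal to `u`. Then `‖v‖² = (‖u‖ + a)² + ‖p‖²`, so `‖v‖² - ‖u‖² = 2 a ‖u‖ + a² + ‖p‖²`, and
dividing by `‖v‖ + ‖u‖ ≥ ‖u‖ ≥ θ h` gives `|‖v‖ - ‖u‖| ≤ 2 |a| + (a² + ‖p‖²) / (θ h)`. With
`|a| = O(h³)` and `‖p‖ = O(h²)` every term is `O(h³)`: the orthogonal deviation enters only
quadratically.
-/

open scoped RealInnerProductSpace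

theorem abs_sub_le_abs_sq_sub_sq_div {a b : ℝ} (ha : 0 < a) (hb : 0 ≤ b) :
    |b - a| ≤ |b ^ 2 - a ^ 2| / a := by
  rw [le_div_iff₀ ha, sq_sub_sq, abs_mul, abs_of_nonneg (by positivity : 0 ≤ b + a),
    mul_comm]
  gcongr
  linarith

section InnerProductSpace

variable {E : Type*} [NormedAddCommGroup E] [InnerProductSpace ℝ E]

theorem norm_add_sq_eq_of_orthogonal_decomposition (u w : E) (hu : u ≠ 0) :
    ‖u + w‖ ^ 2 = (‖u‖ + ⟪w, u⟫ / ‖u‖) ^ 2 + ‖w - (⟪w, u⟫ / ‖u‖ ^ 2) • u‖ ^ 2 := by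
  have hu' : ‖u‖ ≠ 0 := norm_ne_zero_iff.mpr hu
  rw [norm_add_sq_real, norm_sub_sq_real, real_inner_smul_right, norm_smul, Real.norm_eq_abs,
    mul_pow, sq_abs, real_inner_comm u w]
  field_simp
  ring

theorem abs_norm_sub_norm_le_of_orthogonal_decomposition (u v : E) (hu : u ≠ 0) :
    |‖v‖ - ‖u‖| ≤ 2 * (|⟪v - u, u⟫| / ‖u‖)
      + ((⟪v - u, u⟫ / ‖u‖) ^ 2 + ‖(v - u) - (⟪v - u, u⟫ / ‖u‖ ^ 2) • u‖ ^ 2) / ‖u‖ := by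
  set a := ⟪v - u, u⟫ / ‖u‖
  set p := ‖(v - u) - (⟪v - u, u⟫ / ‖u‖ ^ 2) • u‖
  have hA : 0 < ‖u‖ := norm_pos_iff.mpr hu
  have hv : ‖v‖ ^ 2 - ‖u‖ ^ 2 = 2 * a * ‖u‖ + (a ^ 2 + p ^ 2) := by
    have := norm_add_sq_eq_of_orthogonal_decomposition u (v - u) hu
    rw [add_sub_cancel] at this
    rw [this]
    ring
  calc |‖v‖ - ‖u‖| ≤ |‖v‖ ^ 2 - ‖u‖ ^ 2| / ‖u‖ := abs_sub_le_abs_sq_sub_sq_div hA (norm_nonneg v)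
    _ ≤ (|2 * a * ‖u‖| + |a ^ 2 + p ^ 2|) / ‖u‖ := by rw [hv]; gcongr; exact abs_add_le _ _
    _ = 2 * |a| + (a ^ 2 + p ^ 2) / ‖u‖ := by
      rw [abs_mul, abs_mul, abs_of_pos hA, abs_of_nonneg (by positivity : 0 ≤ a ^ 2 + p ^ 2)]
      field_simp
      ring
    _ = 2 * (|⟪v - u, u⟫| / ‖u‖) + (a ^ 2 + p ^ 2) / ‖u‖ := by
      rw [abs_div, abs_of_pos hA]

end InnerProductSpace

theorem edge_length_supercloseness_general
    (θ c₁ c₂ : ℝ) (hθ : 0 < θ) (hc₂ : 0 ≤ c₂) :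
    ∃ C > (0 : ℝ), ∃ h₀ > (0 : ℝ), h₀ ≤ 1 ∧
      ∀ h : ℝ, 0 < h → h ≤ h₀ →
        ∀ u v : EuclideanSpace ℝ (Fin 3),
          θ * h ≤ ‖u‖ →
          |⟪v - u, u⟫| / ‖u‖ ≤ c₂ * h ^ 3 →
          ‖(v - u) - (⟪v - u, u⟫ / ‖u‖ ^ 2) • u‖ ≤ c₁ * h ^ 2 →
          |‖v‖ - ‖u‖| ≤ C * h ^ 3 := by
  refine ⟨2 * c₂ + (c₁ ^ 2 + c₂ ^ 2) / θ + 1, by positivity, 1, one_pos, le_rfl, ?_⟩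
  intro h hh hh1 u v hu ha hp
  have hA : 0 < ‖u‖ := (mul_pos hθ hh).trans_le hu
  have ha_sq : (⟪v - u, u⟫ / ‖u‖) ^ 2 ≤ (c₂ * h ^ 3) ^ 2 := by
    rw [← sq_abs, abs_div, abs_of_pos hA]
    gcongr
  have hp_sq : ‖(v - u) - (⟪v - u, u⟫ / ‖u‖ ^ 2) • u‖ ^ 2 ≤ (c₁ * h ^ 2) ^ 2 :=
    pow_le_pow_left₀ (norm_nonneg _) hp 2
  have hh2 : h ^ 2 ≤ 1 := pow_le_one₀ hh.le hh1
  calc |‖v‖ - ‖u‖|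
      ≤ _ := abs_norm_sub_norm_le_of_orthogonal_decomposition u v (norm_pos_iff.mp hA)
    _ ≤ 2 * (c₂ * h ^ 3) + ((c₂ * h ^ 3) ^ 2 + (c₁ * h ^ 2) ^ 2) / (θ * h) := by gcongr
    _ = (2 * c₂ + (c₁ ^ 2 + c₂ ^ 2 * h ^ 2) / θ) * h ^ 3 := by field_simp; ring
    _ ≤ (2 * c₂ + (c₁ ^ 2 + c₂ ^ 2) / θ) * h ^ 3 := by
      gcongr
      exact mul_le_of_le_one_right (sq_nonneg c₂) hh2
    _ ≤ (2 * c₂ + (c₁ ^ 2 + c₂ ^ 2) / θ + 1) * h ^ 3 := by linarith [pow_pos hh 3]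

/-- Lemma 3.4, first estimate: edge-length supercloseness. -/
theorem edge_length_supercloseness
    (θ c₁ c₂ : ℝ) (hθ : 0 < θ) (hc₁ : 0 ≤ c₁) (hc₂ : 0 ≤ c₂) :
    ∃ C > (0 : ℝ), ∃ h₀ > (0 : ℝ), h₀ ≤ 1 ∧
      ∀ h : ℝ, 0 < h → h ≤ h₀ →
        ∀ u v : EuclideanSpace ℝ (Fin 3),
          θ * h ≤ ‖u‖ →
          |⟪v - u, u⟫| / ‖u‖ ≤ c₂ * h ^ 3 →
          ‖(v - u) - (⟪v - u, u⟫ / ‖u‖ ^ 2) • u‖ ≤ c₁ * h ^ 2 →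
          |‖v‖ - ‖u‖| ≤ C * h ^ 3 :=
  edge_length_supercloseness_general θ c₁ c₂ hθ hc₂
end

section
/- Let θ > 0 and c ≥ 0. There exist constants C > 0 and h₀ ∈ (0,1], depending only on θ and c, such that for every h ∈ (0, h₀] the following holds: let p₀, p₁, p₂ ∈ ℝ³ be the vertices of a triangle τ₁ all of whose side lengths ‖p₁ − p₀‖, ‖p₂ − p₀‖, ‖p₂ − p₁‖ lie in [θh, h] and whose area satisfies A(τ₁) ≥ θh², and let q₀, q₁, q₂ ∈ ℝ³ be the vertices of a triangle τ₂ such that | ‖q_i − q_j‖ − ‖p_i − p_j‖ | ≤ c h³ for every pair i ≠ j. Then | A(τ₂)/A(τ₁) − 1 | ≤ C h². -/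
/-! Heron's formula writes `16 A²` as a quadratic polynomial in the squared side lengths.
Perturbing sides of length `≤ h` by `O(h³)` perturbs their squares by `O(h⁴)`, hence `16 A²` by
`O(h⁴ · h²) = O(h⁶)`. Dividing by `A(τ₁)² ≥ θ² h⁴`, and using `|t - 1| ≤ |t² - 1|` for `t ≥ 0`,
bounds the area ratio by `1 + O(h²)`. -/

/-- The cross product on `ℝ³` with the Euclidean norm. -/
noncomputable def cross3 (u v : EuclideanSpace ℝ (Fin 3)) : EuclideanSpace ℝ (Fin 3) :=
  (WithLp.equiv 2 (Fin 3 → ℝ)).symm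
    ![u 1 * v 2 - u 2 * v 1, u 2 * v 0 - u 0 * v 2, u 0 * v 1 - u 1 * v 0]

/-- Area of the triangle with vertices `p₀ p₁ p₂ ∈ ℝ³`. -/
noncomputable def triArea (p₀ p₁ p₂ : EuclideanSpace ℝ (Fin 3)) : ℝ :=
  ‖cross3 (p₁ - p₀) (p₂ - p₀)‖ / 2

lemma cross3_eq_crossProduct (u v : EuclideanSpace ℝ (Fin 3)) :
    cross3 u v = WithLp.toLp 2 (crossProduct u.ofLp v.ofLp) := by
  rw [cross_apply]; rfl

lemma EuclideanSpace.norm_sq_eq_dotProduct {n : Type*} [Fintype n] (u : EuclideanSpace ℝ n) :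
    ‖u‖ ^ 2 = u.ofLp ⬝ᵥ u.ofLp := by
  rw [← real_inner_self_eq_norm_sq, EuclideanSpace.inner_eq_star_dotProduct]
  simp

lemma norm_cross3_sq (u v : EuclideanSpace ℝ (Fin 3)) :
    ‖cross3 u v‖ ^ 2 = ‖u‖ ^ 2 * ‖v‖ ^ 2 - inner ℝ u v ^ 2 := by
  simp only [cross3_eq_crossProduct, EuclideanSpace.norm_sq_eq_dotProduct, cross_dot_cross,
    EuclideanSpace.inner_eq_star_dotProduct, star_trivial]
  rw [dotProduct_comm v.ofLp u.ofLp]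
  ring

def heronForm (x y z : ℝ) : ℝ := 4 * x * y - (x + y - z) ^ 2

lemma sixteen_mul_triArea_sq (p₀ p₁ p₂ : EuclideanSpace ℝ (Fin 3)) :
    16 * triArea p₀ p₁ p₂ ^ 2 = heronForm (‖p₁ - p₀‖ ^ 2) (‖p₂ - p₀‖ ^ 2) (‖p₂ - p₁‖ ^ 2) := by
  have hside : p₂ - p₁ = (p₂ - p₀) - (p₁ - p₀) := by abel
  rw [triArea, hside]
  generalize p₁ - p₀ = u, p₂ - p₀ = v
  rw [div_pow, norm_cross3_sq, norm_sub_sq_real, heronForm, real_inner_comm u]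
  ring

lemma abs_mul_sub_mul_le {x y x' y' δ M : ℝ} (hx : |x| ≤ M) (hy' : |y'| ≤ M)
    (hdx : |x' - x| ≤ δ) (hdy : |y' - y| ≤ δ) : |x' * y' - x * y| ≤ 2 * δ * M := by
  have hM : 0 ≤ M := (abs_nonneg x).trans hx
  calc |x' * y' - x * y| = |(x' - x) * y' + x * (y' - y)| := by ring_nf
    _ ≤ |x' - x| * |y'| + |x| * |y' - y| := by rw [← abs_mul, ← abs_mul]; exact abs_add_le _ _
    _ ≤ δ * M + M * δ := by gcongr; exact (abs_nonneg _).trans hdx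
    _ = 2 * δ * M := by ring

lemma abs_heronForm_sub_le {x y z x' y' z' δ M : ℝ}
    (hx : |x| ≤ M) (hy : |y| ≤ M) (hz : |z| ≤ M) (hx' : |x'| ≤ M) (hy' : |y'| ≤ M) (hz' : |z'| ≤ M)
    (hdx : |x' - x| ≤ δ) (hdy : |y' - y| ≤ δ) (hdz : |z' - z| ≤ δ) :
    |heronForm x' y' z' - heronForm x y z| ≤ 26 * δ * M := by
  have habs : ∀ a b c : ℝ, |a + b - c| ≤ |a| + |b| + |c| := fun a b c => by
    linarith [abs_sub (a + b) c, abs_add_le a b]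
  have hds : |(x' + y' - z') - (x + y - z)| ≤ 3 * δ := by
    rw [show (x' + y' - z') - (x + y - z) = x' - x + (y' - y) - (z' - z) by ring]
    linarith [habs (x' - x) (y' - y) (z' - z)]
  have hsq : |(x' + y' - z') ^ 2 - (x + y - z) ^ 2| ≤ 18 * δ * M := by
    have hs : |x + y - z| ≤ 3 * M := by linarith [habs x y z]
    have hs' : |x' + y' - z'| ≤ 3 * M := by linarith [habs x' y' z']
    have := abs_mul_sub_mul_le hs hs' hds hds
    rw [sq, sq]; linarith
  have hprod := abs_mul_sub_mul_le hx hy' hdx hdy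
  calc |heronForm x' y' z' - heronForm x y z|
      = |4 * (x' * y' - x * y) - ((x' + y' - z') ^ 2 - (x + y - z) ^ 2)| := by
        rw [heronForm, heronForm]; ring_nf
    _ ≤ |4 * (x' * y' - x * y)| + |(x' + y' - z') ^ 2 - (x + y - z) ^ 2| := abs_sub _ _
    _ ≤ 26 * δ * M := by rw [abs_mul, abs_of_pos four_pos]; linarith

lemma abs_sq_sub_sq_le {a b δ : ℝ} (h : |b - a| ≤ δ) : |b ^ 2 - a ^ 2| ≤ δ * (2 * |a| + δ) := by
  have hsum : |b + a| ≤ 2 * |a| + δ := by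
    have := abs_add_le (b - a) (2 * a)
    rw [show b - a + 2 * a = b + a by ring, abs_mul, abs_two] at this
    linarith
  rw [sq_sub_sq, abs_mul]
  have hδ : 0 ≤ δ := (abs_nonneg _).trans h
  calc |b + a| * |b - a| ≤ (2 * |a| + δ) * δ := mul_le_mul hsum h (abs_nonneg _) (by positivity)
    _ = δ * (2 * |a| + δ) := mul_comm _ _

lemma abs_div_sub_one_le {a b : ℝ} (ha : 0 < a) (hb : 0 ≤ b) :
    |b / a - 1| ≤ |b ^ 2 - a ^ 2| / a ^ 2 := by
  calc |b / a - 1| = |b - a| * a / a ^ 2 := by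
        rw [div_sub_one ha.ne', abs_div, abs_of_pos ha]; field_simp
    _ ≤ |b - a| * (b + a) / a ^ 2 := by gcongr; linarith
    _ = |b ^ 2 - a ^ 2| / a ^ 2 := by
        rw [sq_sub_sq, abs_mul, abs_of_nonneg (by linarith : 0 ≤ b + a), mul_comm]

lemma sq_bounds_of_abs_sub_le {a b h δ : ℝ} (ha₀ : 0 ≤ a) (ha : a ≤ h) (hab : |b - a| ≤ δ) :
    |a ^ 2| ≤ (h + δ) ^ 2 ∧ |b ^ 2| ≤ (h + δ) ^ 2 ∧ |b ^ 2 - a ^ 2| ≤ δ * (2 * h + δ) := by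
  have hδ : 0 ≤ δ := (abs_nonneg _).trans hab
  have hb : |b| ≤ h + δ := by linarith [abs_sub_abs_le_abs_sub b a, abs_of_nonneg ha₀]
  refine ⟨?_, ?_, ?_⟩
  · rw [abs_of_nonneg (by positivity)]; gcongr; linarith
  · rw [abs_pow]; gcongr
  · calc |b ^ 2 - a ^ 2| ≤ δ * (2 * |a| + δ) := abs_sq_sub_sq_le hab
      _ ≤ δ * (2 * h + δ) := by rw [abs_of_nonneg ha₀]; gcongr

lemma abs_sixteen_mul_triArea_sq_sub_le {p₀ p₁ p₂ q₀ q₁ q₂ : EuclideanSpace ℝ (Fin 3)} {h δ : ℝ}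
    (h₀₁ : ‖p₁ - p₀‖ ≤ h) (h₀₂ : ‖p₂ - p₀‖ ≤ h) (h₁₂ : ‖p₂ - p₁‖ ≤ h)
    (d₀₁ : |‖q₁ - q₀‖ - ‖p₁ - p₀‖| ≤ δ) (d₀₂ : |‖q₂ - q₀‖ - ‖p₂ - p₀‖| ≤ δ)
    (d₁₂ : |‖q₂ - q₁‖ - ‖p₂ - p₁‖| ≤ δ) :
    |16 * triArea q₀ q₁ q₂ ^ 2 - 16 * triArea p₀ p₁ p₂ ^ 2| ≤
      26 * (δ * (2 * h + δ)) * (h + δ) ^ 2 := by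
  obtain ⟨x, x', dx⟩ := sq_bounds_of_abs_sub_le (norm_nonneg _) h₀₁ d₀₁
  obtain ⟨y, y', dy⟩ := sq_bounds_of_abs_sub_le (norm_nonneg _) h₀₂ d₀₂
  obtain ⟨z, z', dz⟩ := sq_bounds_of_abs_sub_le (norm_nonneg _) h₁₂ d₁₂
  rw [sixteen_mul_triArea_sq, sixteen_mul_triArea_sq]
  exact abs_heronForm_sub_le x y z x' y' z' dx dy dz

/-- Lemma 3.5, second estimate: supercloseness of triangle area ratios. -/
theorem triangle_area_ratio_supercloseness
    (θ c : ℝ) (hθ : 0 < θ) (hc : 0 ≤ c) :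
    ∃ C > (0 : ℝ), ∃ h₀ > (0 : ℝ), h₀ ≤ 1 ∧
      ∀ h : ℝ, 0 < h → h ≤ h₀ →
        ∀ p₀ p₁ p₂ q₀ q₁ q₂ : EuclideanSpace ℝ (Fin 3),
          θ * h ≤ ‖p₁ - p₀‖ → ‖p₁ - p₀‖ ≤ h →
          θ * h ≤ ‖p₂ - p₀‖ → ‖p₂ - p₀‖ ≤ h →
          θ * h ≤ ‖p₂ - p₁‖ → ‖p₂ - p₁‖ ≤ h →
          θ * h ^ 2 ≤ triArea p₀ p₁ p₂ →
          |‖q₁ - q₀‖ - ‖p₁ - p₀‖| ≤ c * h ^ 3 →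
          |‖q₂ - q₀‖ - ‖p₂ - p₀‖| ≤ c * h ^ 3 →
          |‖q₂ - q₁‖ - ‖p₂ - p₁‖| ≤ c * h ^ 3 →
          |triArea q₀ q₁ q₂ / triArea p₀ p₁ p₂ - 1| ≤ C * h ^ 2 := by
  set K := 26 * c * (2 + c) * (1 + c) ^ 2
  refine ⟨K / (16 * θ ^ 2) + 1, by positivity, 1, one_pos, le_rfl, ?_⟩
  intro h hh hh₁ p₀ p₁ p₂ q₀ q₁ q₂ _ h₀₁ _ h₀₂ _ h₁₂ hA d₀₁ d₀₂ d₁₂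
  have hA₁ : 0 < triArea p₀ p₁ p₂ := lt_of_lt_of_le (by positivity) hA
  have hA₂ : 0 ≤ triArea q₀ q₁ q₂ := by unfold triArea; positivity
  have hstab := abs_sixteen_mul_triArea_sq_sub_le h₀₁ h₀₂ h₁₂ d₀₁ d₀₂ d₁₂
  have hδ : c * h ^ 3 ≤ c * h := by gcongr; exact pow_le_of_le_one hh.le hh₁ (by norm_num)
  have hK : 26 * (c * h ^ 3 * (2 * h + c * h ^ 3)) * (h + c * h ^ 3) ^ 2 ≤ K * h ^ 6 :=
    calc _ ≤ 26 * (c * h ^ 3 * (2 * h + c * h)) * (h + c * h) ^ 2 := by gcongr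
      _ = K * h ^ 6 := by ring
  calc |triArea q₀ q₁ q₂ / triArea p₀ p₁ p₂ - 1|
      ≤ |triArea q₀ q₁ q₂ ^ 2 - triArea p₀ p₁ p₂ ^ 2| / triArea p₀ p₁ p₂ ^ 2 :=
        abs_div_sub_one_le hA₁ hA₂
    _ = |16 * triArea q₀ q₁ q₂ ^ 2 - 16 * triArea p₀ p₁ p₂ ^ 2| /
          (16 * triArea p₀ p₁ p₂ ^ 2) := by
        rw [← mul_sub, abs_mul, abs_of_pos (by norm_num : (0 : ℝ) < 16),
          mul_div_mul_left _ _ (by norm_num)]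
    _ ≤ K * h ^ 6 / (16 * (θ * h ^ 2) ^ 2) := by gcongr; exact hstab.trans hK
    _ = K / (16 * θ ^ 2) * h ^ 2 := by field_simp
    _ ≤ (K / (16 * θ ^ 2) + 1) * h ^ 2 := by gcongr; linarith
end

section
/- Let θ > 0 and c ≥ 0. There exist constants C > 0 and h₀ ∈ (0,1], depending only on θ and c, such that for every h ∈ (0, h₀] the following holds: let ξ₁, ξ₂ ∈ ℝ² span a triangle with vertices 0, ξ₁, ξ₂ all of whose side lengths lie in [θh, h] and with |det(ξ₁, ξ₂)| ≥ θh², and let ψ₁, ψ₂ ∈ ℝ³ satisfy |ψᵢ(j) − ξᵢ(j)| ≤ c h³ for j = 1, 2 and |ψᵢ(3)| ≤ c h² for i = 1, 2. Let Γ be the unique real 3×2 matrix with Γ ξᵢ = ψᵢ for i = 1, 2, and g_Γ = Γᵀ Γ. Then | √(det g_Γ) − 1 | ≤ C h². -/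
open Matrix
open scoped InnerProductSpace

/-!
Let `X` be the matrix with rows `ξ₁, ξ₂`. Since `Γ ξᵢ = ψᵢ`, the Gram matrix of `ψ₁, ψ₂` is
`X (Γᵀ Γ) Xᵀ` while that of `ξ₁, ξ₂` is `X Xᵀ`, so `det g_Γ` is the quotient of the two Gram
determinants. Their entries differ by `O(h⁴)` (a tangential deviation `h³` against a side `h`, or
two normal deviations `h²`), hence the determinants differ by `O(h⁶)`, whereas
`det (X Xᵀ) = det(ξ₁, ξ₂)² ≥ θ² h⁴`. So `det g_Γ = 1 + O(h²)`, and the same holds for its root.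
-/

theorem abs_mul_sub_mul_le_s4 {a b a' b' r ε : ℝ} (ha : |a| ≤ r) (hb : |b| ≤ r)
    (ha' : |a' - a| ≤ ε) (hb' : |b' - b| ≤ ε) : |a' * b' - a * b| ≤ ε * (2 * r + ε) := by
  have hr : 0 ≤ r := (abs_nonneg _).trans ha
  have hε : 0 ≤ ε := (abs_nonneg _).trans ha'
  have hb'_le : |b'| ≤ r + ε :=
    calc |b'| = |b + (b' - b)| := by rw [add_sub_cancel]
      _ ≤ r + ε := (abs_add_le _ _).trans (add_le_add hb hb')
  calc |a' * b' - a * b| = |(a' - a) * b' + a * (b' - b)| := by ring_nf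
    _ ≤ |a' - a| * |b'| + |a| * |b' - b| := by
      rw [← abs_mul, ← abs_mul]; exact abs_add_le _ _
    _ ≤ ε * (r + ε) + r * ε := by gcongr
    _ = ε * (2 * r + ε) := by ring

theorem abs_det_sub_det_le_fin_two {A B : Matrix (Fin 2) (Fin 2) ℝ} {r ε : ℝ}
    (hA : ∀ i j, |A i j| ≤ r) (hBA : ∀ i j, |B i j - A i j| ≤ ε) :
    |B.det - A.det| ≤ 2 * ε * (2 * r + ε) := by
  rw [det_fin_two, det_fin_two]
  calc _ = |(B 0 0 * B 1 1 - A 0 0 * A 1 1) - (B 0 1 * B 1 0 - A 0 1 * A 1 0)| := by ring_nf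
    _ ≤ ε * (2 * r + ε) + ε * (2 * r + ε) :=
      (abs_sub _ _).trans <| add_le_add
        (abs_mul_sub_mul_le_s4 (hA ..) (hA ..) (hBA ..) (hBA ..))
        (abs_mul_sub_mul_le_s4 (hA ..) (hA ..) (hBA ..) (hBA ..))
    _ = 2 * ε * (2 * r + ε) := by ring

-- Also for `x < 0`, where `√x = 0`.
theorem abs_sqrt_sub_one_le (x : ℝ) : |√x - 1| ≤ |x - 1| := by
  rcases le_or_gt 0 x with hx | hx
  · have hs : 0 ≤ √x + 1 := by positivity
    calc |√x - 1| ≤ |√x - 1| * (√x + 1) :=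
          le_mul_of_one_le_right (abs_nonneg _) (by linarith [Real.sqrt_nonneg x])
      _ = |x - 1| := by
          rw [← abs_of_nonneg hs, ← abs_mul]
          congr 1
          linear_combination Real.sq_sqrt hx
  · rw [Real.sqrt_eq_zero_of_nonpos hx.le, abs_of_neg (by linarith : x - 1 < 0)]
    norm_num; linarith

theorem gram_euclideanSpace_eq_mul_transpose {m n : Type*} [Fintype m]
    (ξ : n → EuclideanSpace ℝ m) :
    gram ℝ ξ = (of fun i k => ξ i k) * (of fun i k => ξ i k)ᵀ := by
  ext i j
  simp [gram_apply, EuclideanSpace.inner_eq_star_dotProduct, mul_apply, dotProduct, mul_comm]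

theorem det_gram_fin_two (ξ₁ ξ₂ : EuclideanSpace ℝ (Fin 2)) :
    (gram ℝ ![ξ₁, ξ₂]).det = (ξ₁ 0 * ξ₂ 1 - ξ₁ 1 * ξ₂ 0) ^ 2 := by
  rw [gram_euclideanSpace_eq_mul_transpose, det_mul, det_transpose, det_fin_two]
  simp [sq]

theorem det_gram_of_mulVec_eq {m n : Type*} [Fintype m] [Fintype n] [DecidableEq n]
    (Γ : Matrix m n ℝ) {ξ : n → EuclideanSpace ℝ n} {ψ : n → EuclideanSpace ℝ m}
    (hψ : ∀ i, Γ *ᵥ ξ i = ψ i) :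
    (gram ℝ ψ).det = (gram ℝ ξ).det * (Γᵀ * Γ).det := by
  set X : Matrix n n ℝ := of fun i k => ξ i k
  have hY : (of fun i k => ψ i k) = X * Γᵀ := by
    ext i k
    simp [X, ← hψ, mulVec, mul_apply, dotProduct, mul_comm]
  rw [gram_euclideanSpace_eq_mul_transpose, gram_euclideanSpace_eq_mul_transpose, hY,
    transpose_mul, transpose_transpose,
    show X * Γᵀ * (Γ * Xᵀ) = X * (Γᵀ * Γ) * Xᵀ by simp only [Matrix.mul_assoc]]
  simp only [det_mul, det_transpose]
  ring

theorem abs_inner_sub_inner_le {n : ℕ} {x y : EuclideanSpace ℝ (Fin n)}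
    {u v : EuclideanSpace ℝ (Fin (n + 1))} {r ε ν : ℝ} (hx : ‖x‖ ≤ r) (hy : ‖y‖ ≤ r)
    (hu : ∀ k, |u k.castSucc - x k| ≤ ε) (hv : ∀ k, |v k.castSucc - y k| ≤ ε)
    (hu_last : |u (Fin.last n)| ≤ ν) (hv_last : |v (Fin.last n)| ≤ ν) :
    |⟪u, v⟫_ℝ - ⟪x, y⟫_ℝ| ≤ n * (ε * (2 * r + ε)) + ν ^ 2 := by
  have hcoord {z : EuclideanSpace ℝ (Fin n)} (hz : ‖z‖ ≤ r) (k : Fin n) : |z k| ≤ r :=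
    (PiLp.norm_apply_le z k).trans hz
  simp only [PiLp.inner_apply, Fin.sum_univ_castSucc, RCLike.inner_apply, conj_trivial]
  calc _ = |∑ k, (v k.castSucc * u k.castSucc - y k * x k)
          + v (Fin.last n) * u (Fin.last n)| := by
        rw [Finset.sum_sub_distrib]; ring_nf
    _ ≤ ∑ k, |v k.castSucc * u k.castSucc - y k * x k|
          + |v (Fin.last n)| * |u (Fin.last n)| := by
        rw [← abs_mul]
        exact (abs_add_le _ _).trans (add_le_add_left (Finset.abs_sum_le_sum_abs _ _) _)
    _ ≤ ∑ _k : Fin n, ε * (2 * r + ε) + ν * ν := by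
        gcongr with k
        · exact abs_mul_sub_mul_le_s4 (hcoord hy k) (hcoord hx k) (hv k) (hu k)
        · exact (abs_nonneg _).trans hv_last
    _ = n * (ε * (2 * r + ε)) + ν ^ 2 := by simp [sq]

theorem abs_det_gram_sub_det_gram_le {n : ℕ} {ξ : Fin 2 → EuclideanSpace ℝ (Fin n)}
    {ψ : Fin 2 → EuclideanSpace ℝ (Fin (n + 1))} {c h : ℝ} (hc : 0 ≤ c) (hh : 0 ≤ h)
    (hh1 : h ≤ 1) (hξ : ∀ i, ‖ξ i‖ ≤ h) (hψ : ∀ i k, |ψ i k.castSucc - ξ i k| ≤ c * h ^ 3)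
    (hψ_last : ∀ i, |ψ i (Fin.last n)| ≤ c * h ^ 2) :
    |(gram ℝ ψ).det - (gram ℝ ξ).det| ≤
      2 * (n * c * (2 + c) + c ^ 2) * (2 + (n * c * (2 + c) + c ^ 2)) * h ^ 6 := by
  set K := n * c * (2 + c) + c ^ 2
  have hK : 0 ≤ K := by positivity
  have hgram_ξ (i j : Fin 2) : |gram ℝ ξ i j| ≤ h ^ 2 := by
    rw [gram_apply, sq]
    exact (abs_real_inner_le_norm _ _).trans (mul_le_mul (hξ i) (hξ j) (norm_nonneg _) hh)
  have hgram_ψ (i j : Fin 2) : |gram ℝ ψ i j - gram ℝ ξ i j| ≤ K * h ^ 4 := by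
    have hch : c * h ^ 3 ≤ c * h := by gcongr; exact pow_le_of_le_one hh hh1 (by norm_num)
    calc _ ≤ n * (c * h ^ 3 * (2 * h + c * h ^ 3)) + (c * h ^ 2) ^ 2 :=
          abs_inner_sub_inner_le (hξ i) (hξ j) (hψ i) (hψ j) (hψ_last i) (hψ_last j)
      _ ≤ n * (c * h ^ 3 * (2 * h + c * h)) + (c * h ^ 2) ^ 2 := by gcongr
      _ = K * h ^ 4 := by ring
  have hh42 : h ^ 4 ≤ h ^ 2 := pow_le_pow_of_le_one hh hh1 (by norm_num)
  calc _ ≤ 2 * (K * h ^ 4) * (2 * h ^ 2 + K * h ^ 4) :=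
        abs_det_sub_det_le_fin_two hgram_ξ hgram_ψ
    _ ≤ 2 * (K * h ^ 4) * (2 * h ^ 2 + K * h ^ 2) := by gcongr
    _ = 2 * K * (2 + K) * h ^ 6 := by ring

/-- Proposition 3.6(i): supercloseness of the metric determinant. -/
theorem metric_det_supercloseness
    (θ c : ℝ) (hθ : 0 < θ) (hc : 0 ≤ c) :
    ∃ C > (0 : ℝ), ∃ h₀ > (0 : ℝ), h₀ ≤ 1 ∧
      ∀ h : ℝ, 0 < h → h ≤ h₀ →
        ∀ (ξ₁ ξ₂ : EuclideanSpace ℝ (Fin 2)) (ψ₁ ψ₂ : EuclideanSpace ℝ (Fin 3))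
          (Γ : Matrix (Fin 3) (Fin 2) ℝ),
          θ * h ≤ ‖ξ₁‖ → ‖ξ₁‖ ≤ h →
          θ * h ≤ ‖ξ₂‖ → ‖ξ₂‖ ≤ h →
          θ * h ≤ ‖ξ₂ - ξ₁‖ → ‖ξ₂ - ξ₁‖ ≤ h →
          θ * h ^ 2 ≤ |ξ₁ 0 * ξ₂ 1 - ξ₁ 1 * ξ₂ 0| →
          |ψ₁ 0 - ξ₁ 0| ≤ c * h ^ 3 → |ψ₁ 1 - ξ₁ 1| ≤ c * h ^ 3 →
          |ψ₂ 0 - ξ₂ 0| ≤ c * h ^ 3 → |ψ₂ 1 - ξ₂ 1| ≤ c * h ^ 3 →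
          |ψ₁ 2| ≤ c * h ^ 2 → |ψ₂ 2| ≤ c * h ^ 2 →
          Γ.mulVec ξ₁ = ψ₁ → Γ.mulVec ξ₂ = ψ₂ →
          |Real.sqrt (Γᵀ * Γ).det - 1| ≤ C * h ^ 2 := by
  set K : ℝ := 2 * c * (2 + c) + c ^ 2
  refine ⟨(2 * K * (2 + K) + 1) / θ ^ 2, by positivity, 1, one_pos, le_rfl, ?_⟩
  intro h hh hh1 ξ₁ ξ₂ ψ₁ ψ₂ Γ _ hξ₁ _ hξ₂ _ _ hdet h₁₀ h₁₁ h₂₀ h₂₁ h₁₂ h₂₂ hΓ₁ hΓ₂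
  have hG : θ ^ 2 * h ^ 4 ≤ (gram ℝ ![ξ₁, ξ₂]).det := by
    rw [det_gram_fin_two, ← sq_abs (_ - _), show θ ^ 2 * h ^ 4 = (θ * h ^ 2) ^ 2 by ring]
    gcongr
  have hG_pos : 0 < (gram ℝ ![ξ₁, ξ₂]).det := lt_of_lt_of_le (by positivity) hG
  have hgram := det_gram_of_mulVec_eq Γ (ξ := ![ξ₁, ξ₂]) (ψ := ![ψ₁, ψ₂])
    (Fin.forall_fin_two.2 ⟨hΓ₁, hΓ₂⟩)
  have hdiff := abs_det_gram_sub_det_gram_le (ξ := ![ξ₁, ξ₂]) (ψ := ![ψ₁, ψ₂]) hc hh.le hh1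
    (Fin.forall_fin_two.2 ⟨hξ₁, hξ₂⟩)
    (Fin.forall_fin_two.2 ⟨Fin.forall_fin_two.2 ⟨h₁₀, h₁₁⟩, Fin.forall_fin_two.2 ⟨h₂₀, h₂₁⟩⟩)
    (Fin.forall_fin_two.2 ⟨h₁₂, h₂₂⟩)
  rw [hgram, Nat.cast_ofNat] at hdiff
  calc |√(Γᵀ * Γ).det - 1| ≤ |(Γᵀ * Γ).det - 1| := abs_sqrt_sub_one_le _
    _ = |(gram ℝ ![ξ₁, ξ₂]).det * (Γᵀ * Γ).det - (gram ℝ ![ξ₁, ξ₂]).det| /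
          (gram ℝ ![ξ₁, ξ₂]).det := by
        rw [← mul_sub_one, abs_mul, abs_of_pos hG_pos, mul_div_cancel_left₀ _ hG_pos.ne']
    _ ≤ 2 * K * (2 + K) * h ^ 6 / (θ ^ 2 * h ^ 4) := by gcongr
    _ = 2 * K * (2 + K) / θ ^ 2 * h ^ 2 := by field_simp
    _ ≤ (2 * K * (2 + K) + 1) / θ ^ 2 * h ^ 2 := by gcongr; linarith
end

section
/- Let θ > 0 and c ≥ 0. There exist constants C > 0 and h₀ ∈ (0,1], depending only on θ and c, such that for every h ∈ (0, h₀] the following holds: let ξ₁, ξ₂ ∈ ℝ² span a triangle with vertices 0, ξ₁, ξ₂ all of whose side lengths lie in [θh, h] and with |det(ξ₁, ξ₂)| ≥ θh², and let ψ₁, ψ₂ ∈ ℝ³ satisfy |ψᵢ(j) − ξᵢ(j)| ≤ c h³ for j = 1, 2 and |ψᵢ(3)| ≤ c h² for i = 1, 2. Let Γ be the unique real 3×2 matrix with Γ ξᵢ = ψᵢ for i = 1, 2. Then ‖Γ − Id‖_∞ ≤ C h, where Id denotes the 3×2 matrix whose upper 2×2 block is the identity and whose last row is zero, and ‖·‖_∞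 is the maximum absolute value of the matrix entries. -/
open Matrix

/-- The 3×2 matrix whose upper 2×2 block is the identity and whose last row is zero. -/
def Id32 : Matrix (Fin 3) (Fin 2) ℝ :=
  Matrix.of fun i j => if (i : ℕ) = (j : ℕ) then 1 else 0

lemma coord_le_norm (x : EuclideanSpace ℝ (Fin 2)) (j : Fin 2) : |x j| ≤ ‖x‖ := by
  rw [EuclideanSpace.norm_eq]
  have hs : |x j| ^ 2 ≤ ∑ i, ‖x i‖ ^ 2 := by
    have := Finset.single_le_sum (f := fun i => ‖x i‖ ^ 2) (fun i _ => by positivity)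
      (Finset.mem_univ j)
    simpa [Real.norm_eq_abs] using this
  calc |x j| = Real.sqrt (|x j| ^ 2) := by rw [Real.sqrt_sq_eq_abs, abs_abs]
    _ ≤ _ := Real.sqrt_le_sqrt hs

lemma cramer_bound (θ c h a b c₂ d e f x y : ℝ) (hθ : 0 < θ) (hc : 0 ≤ c)
    (hh : 0 < h) (hh1 : h ≤ 1)
    (ha : |a| ≤ h) (hb : |b| ≤ h) (hc2 : |c₂| ≤ h) (hd : |d| ≤ h)
    (hD : θ * h ^ 2 ≤ |a * d - b * c₂|)
    (he : |e| ≤ c * h ^ 2) (hf : |f| ≤ c * h ^ 2)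
    (h1 : x * a + y * b = e) (h2 : x * c₂ + y * d = f) :
    |x| ≤ (2 * c / θ) * h ∧ |y| ≤ (2 * c / θ) * h := by
  set D := a * d - b * c₂ with hDdef
  have hDpos : 0 < |D| := lt_of_lt_of_le (by positivity) hD
  have key : ∀ z w : ℝ, z * D = w → |w| ≤ 2 * c * h ^ 3 → |z| ≤ (2 * c / θ) * h := by
    intro z w hzw hw
    have h1 : |z| * |D| ≤ 2 * c * h ^ 3 := by rw [← abs_mul, hzw]; exact hw
    have h2 : |z| * (θ * h ^ 2) ≤ 2 * c * h ^ 3 :=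
      le_trans (mul_le_mul_of_nonneg_left hD (abs_nonneg z)) h1
    rw [div_mul_eq_mul_div, le_div_iff₀ hθ]
    have h3 : (|z| * θ) * h ^ 2 ≤ (2 * c * h) * h ^ 2 := by nlinarith [h2]
    exact le_of_mul_le_mul_right h3 (by positivity)
  constructor
  · refine key x (e * d - f * b) (by linear_combination d * h1 - b * h2) ?_
    calc |e * d - f * b| ≤ |e| * |d| + |f| * |b| := by
            rw [← abs_mul, ← abs_mul]; exact abs_sub _ _
      _ ≤ c * h ^ 2 * h + c * h ^ 2 * h := by
            gcongr <;> positivity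
      _ = 2 * c * h ^ 3 := by ring
  · refine key y (f * a - e * c₂) (by linear_combination a * h2 - c₂ * h1) ?_
    calc |f * a - e * c₂| ≤ |f| * |a| + |e| * |c₂| := by
            rw [← abs_mul, ← abs_mul]; exact abs_sub _ _
      _ ≤ c * h ^ 2 * h + c * h ^ 2 * h := by
            gcongr <;> positivity
      _ = 2 * c * h ^ 3 := by ring

/-- Proposition 3.6(ii), first estimate: `‖Γ − Id‖_∞ = O(h)`. -/
theorem jacobian_closeness
    (θ c : ℝ) (hθ : 0 < θ) (hc : 0 ≤ c) :
    ∃ C > (0 : ℝ), ∃ h₀ > (0 : ℝ), h₀ ≤ 1 ∧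
      ∀ h : ℝ, 0 < h → h ≤ h₀ →
        ∀ (ξ₁ ξ₂ : EuclideanSpace ℝ (Fin 2)) (ψ₁ ψ₂ : EuclideanSpace ℝ (Fin 3))
          (Γ : Matrix (Fin 3) (Fin 2) ℝ),
          θ * h ≤ ‖ξ₁‖ → ‖ξ₁‖ ≤ h →
          θ * h ≤ ‖ξ₂‖ → ‖ξ₂‖ ≤ h →
          θ * h ≤ ‖ξ₂ - ξ₁‖ → ‖ξ₂ - ξ₁‖ ≤ h →
          θ * h ^ 2 ≤ |ξ₁ 0 * ξ₂ 1 - ξ₁ 1 * ξ₂ 0| →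
          |ψ₁ 0 - ξ₁ 0| ≤ c * h ^ 3 → |ψ₁ 1 - ξ₁ 1| ≤ c * h ^ 3 →
          |ψ₂ 0 - ξ₂ 0| ≤ c * h ^ 3 → |ψ₂ 1 - ξ₂ 1| ≤ c * h ^ 3 →
          |ψ₁ 2| ≤ c * h ^ 2 → |ψ₂ 2| ≤ c * h ^ 2 →
          Γ.mulVec ξ₁ = ψ₁ → Γ.mulVec ξ₂ = ψ₂ →
          ∀ (i : Fin 3) (j : Fin 2), |(Γ - Id32) i j| ≤ C * h := by
  refine ⟨2 * c / θ + 1, by positivity, 1, one_pos, le_refl 1, ?_⟩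
  intro h hh hh1 ξ₁ ξ₂ ψ₁ ψ₂ Γ _ hn1 _ hn2 _ _ hD hp10 hp11 hp20 hp21 hp12 hp22 hΓ1 hΓ2
  have ha : |ξ₁ 0| ≤ h := (coord_le_norm ξ₁ 0).trans hn1
  have hb : |ξ₁ 1| ≤ h := (coord_le_norm ξ₁ 1).trans hn1
  have hc2 : |ξ₂ 0| ≤ h := (coord_le_norm ξ₂ 0).trans hn2
  have hd : |ξ₂ 1| ≤ h := (coord_le_norm ξ₂ 1).trans hn2
  have hD' : θ * h ^ 2 ≤ |ξ₁ 0 * ξ₂ 1 - ξ₁ 1 * ξ₂ 0| := hD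
  have hh3le : ∀ z : ℝ, |z| ≤ c * h ^ 3 → |z| ≤ c * h ^ 2 := by
    intro z hz
    refine hz.trans ?_
    have : h ^ 3 ≤ h ^ 2 := by nlinarith
    nlinarith
  have heq1 : ∀ i : Fin 3, Γ i 0 * ξ₁ 0 + Γ i 1 * ξ₁ 1 = ψ₁ i := by
    intro i
    have := congrFun hΓ1 i
    simpa [Matrix.mulVec, dotProduct, Fin.sum_univ_two, mul_comm] using this
  have heq2 : ∀ i : Fin 3, Γ i 0 * ξ₂ 0 + Γ i 1 * ξ₂ 1 = ψ₂ i := by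
    intro i
    have := congrFun hΓ2 i
    simpa [Matrix.mulVec, dotProduct, Fin.sum_univ_two, mul_comm] using this
  have hfin : ∀ z : ℝ, |z| ≤ (2 * c / θ) * h → |z| ≤ (2 * c / θ + 1) * h := by
    intro z hz; nlinarith
  -- row 0 : x = Γ 0 0 - 1, y = Γ 0 1
  have row0 := cramer_bound θ c h (ξ₁ 0) (ξ₁ 1) (ξ₂ 0) (ξ₂ 1)
      (ψ₁ 0 - ξ₁ 0) (ψ₂ 0 - ξ₂ 0) (Γ 0 0 - 1) (Γ 0 1) hθ hc hh hh1 ha hb hc2 hd hD'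
      (hh3le _ hp10) (hh3le _ hp20)
      (by linear_combination heq1 0) (by linear_combination heq2 0)
  have row1 := cramer_bound θ c h (ξ₁ 0) (ξ₁ 1) (ξ₂ 0) (ξ₂ 1)
      (ψ₁ 1 - ξ₁ 1) (ψ₂ 1 - ξ₂ 1) (Γ 1 0) (Γ 1 1 - 1) hθ hc hh hh1 ha hb hc2 hd hD'
      (hh3le _ hp11) (hh3le _ hp21)
      (by linear_combination heq1 1) (by linear_combination heq2 1)
  have row2 := cramer_bound θ c h (ξ₁ 0) (ξ₁ 1) (ξ₂ 0) (ξ₂ 1)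
      (ψ₁ 2) (ψ₂ 2) (Γ 2 0) (Γ 2 1) hθ hc hh hh1 ha hb hc2 hd hD'
      hp12 hp22 (heq1 2) (heq2 2)
  intro i j
  fin_cases i <;> fin_cases j <;>
    simp only [Matrix.sub_apply, Id32, Matrix.of_apply] <;> norm_num
  · exact hfin _ row0.1
  · exact hfin _ row0.2
  · exact hfin _ row1.1
  · exact hfin _ row1.2
  · exact hfin _ row2.1
  · exact hfin _ row2.2
end

section
/- Let θ > 0 and c ≥ 0. There exist constants C > 0 and h₀ ∈ (0,1], depending only on θ and c, such that for every h ∈ (0, h₀] the following holds: let ξ₁, ξ₂ ∈ ℝ² span a triangle with vertices 0, ξ₁, ξ₂ all of whose side lengths lie in [θh, h] and with |det(ξ₁, ξ₂)| ≥ θh², and let ψ₁, ψ₂ ∈ ℝ³ satisfy |ψᵢ(j) − ξᵢ(j)| ≤ c h³ for j = 1, 2 and |ψᵢ(3)| ≤ c h² for i = 1, 2. Let Γ be the unique real 3×2 matrix with Γ ξᵢ = ψᵢ for i = 1, 2, and g_Γ = Γᵀ Γ. Then ‖g_Γ − I₂‖_∞ ≤ C h², where I₂ is the 2×2 identity matrix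 and ‖·‖_∞ is the maximum absolute value of the matrix entries. -/
set_option maxHeartbeats 1000000

open Matrix

private lemma coord_le_norm2 (ξ : EuclideanSpace ℝ (Fin 2)) (i : Fin 2) : |ξ i| ≤ ‖ξ‖ := by
  rw [EuclideanSpace.norm_eq]
  calc |ξ i| = Real.sqrt (‖ξ i‖ ^ 2) := by
        rw [Real.norm_eq_abs, Real.sqrt_sq (abs_nonneg _)]
    _ ≤ _ := Real.sqrt_le_sqrt
        (Finset.single_le_sum (fun j _ => sq_nonneg ‖ξ j‖) (Finset.mem_univ i))

private lemma ebound {θ h e D n m x y N M K : ℝ} (hθ : 0 < θ) (hh : 0 < h)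
    (heD : e * D = n * x - m * y) (hDlb : θ * h ^ 2 ≤ |D|)
    (hn : |n| ≤ N) (hm : |m| ≤ M) (hx : |x| ≤ h) (hy : |y| ≤ h)
    (hK : (N + M) * h ≤ K * (θ * h ^ 2)) : |e| ≤ K := by
  have h1 : |e| * (θ * h ^ 2) ≤ (N + M) * h := by
    calc |e| * (θ * h ^ 2) ≤ |e| * |D| :=
          mul_le_mul_of_nonneg_left hDlb (abs_nonneg e)
      _ = |e * D| := (abs_mul e D).symm
      _ = |n * x - m * y| := by rw [heD]
      _ ≤ |n * x| + |m * y| := by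
          rw [sub_eq_add_neg]
          exact (abs_add_le _ _).trans (by rw [abs_neg])
      _ = |n| * |x| + |m| * |y| := by rw [abs_mul, abs_mul]
      _ ≤ N * h + M * h := by
          have hN : 0 ≤ N := (abs_nonneg n).trans hn
          have hM : 0 ≤ M := (abs_nonneg m).trans hm
          exact add_le_add (mul_le_mul hn hx (abs_nonneg x) hN)
            (mul_le_mul hm hy (abs_nonneg y) hM)
      _ = (N + M) * h := by ring
  have hpos : 0 < θ * h ^ 2 := by positivity
  exact le_of_mul_le_mul_right (h1.trans hK) hpos

private lemma quadbound {K h a b u v p q : ℝ} (hK0 : 0 ≤ K) (hh : 0 < h) (hh2 : h ^ 2 ≤ 1)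
    (ha : |a - 1| ≤ K * h ^ 2) (hb : |b| ≤ K * h ^ 2)
    (hu : |u| ≤ K * h ^ 2) (hv : |v - 1| ≤ K * h ^ 2)
    (hp : |p| ≤ K * h) (hq : |q| ≤ K * h) :
    |a * a + u * u + p * p - 1| ≤ (4 * K + 3 * K ^ 2 + 1) * h ^ 2 ∧
    |a * b + u * v + p * q| ≤ (4 * K + 3 * K ^ 2 + 1) * h ^ 2 ∧
    |b * a + v * u + q * p| ≤ (4 * K + 3 * K ^ 2 + 1) * h ^ 2 ∧
    |b * b + v * v + q * q - 1| ≤ (4 * K + 3 * K ^ 2 + 1) * h ^ 2 := by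
  have hKn : (0:ℝ) ≤ K * h ^ 2 := by positivity
  have hKn1 : (0:ℝ) ≤ K * h := by positivity
  have h2 : (0:ℝ) ≤ h ^ 2 := sq_nonneg h
  have h4 : h ^ 4 ≤ h ^ 2 := by
    calc h ^ 4 = h ^ 2 * h ^ 2 := by ring
      _ ≤ 1 * h ^ 2 := mul_le_mul_of_nonneg_right hh2 h2
      _ = h ^ 2 := one_mul _
  have hK4 : (K * h ^ 2) * (K * h ^ 2) ≤ K ^ 2 * h ^ 2 := by
    have h5 := mul_le_mul_of_nonneg_left h4 (mul_nonneg hK0 hK0)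
    calc (K * h ^ 2) * (K * h ^ 2) = (K * K) * h ^ 4 := by ring
      _ ≤ (K * K) * h ^ 2 := h5
      _ = K ^ 2 * h ^ 2 := by ring
  obtain ⟨la, ua⟩ := abs_le.mp ha
  obtain ⟨lb, ub⟩ := abs_le.mp hb
  obtain ⟨lu, uu⟩ := abs_le.mp hu
  obtain ⟨lv, uv⟩ := abs_le.mp hv
  have sqa : (a - 1) ^ 2 ≤ (K * h ^ 2) * (K * h ^ 2) := by
    calc (a - 1) ^ 2 ≤ (K * h ^ 2) ^ 2 := sq_le_sq' la ua
      _ = (K * h ^ 2) * (K * h ^ 2) := sq (K * h ^ 2)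
  have sqb : b ^ 2 ≤ (K * h ^ 2) * (K * h ^ 2) := by
    calc b ^ 2 ≤ (K * h ^ 2) ^ 2 := sq_le_sq' lb ub
      _ = _ := sq (K * h ^ 2)
  have squ : u ^ 2 ≤ (K * h ^ 2) * (K * h ^ 2) := by
    calc u ^ 2 ≤ (K * h ^ 2) ^ 2 := sq_le_sq' lu uu
      _ = _ := sq (K * h ^ 2)
  have sqv : (v - 1) ^ 2 ≤ (K * h ^ 2) * (K * h ^ 2) := by
    calc (v - 1) ^ 2 ≤ (K * h ^ 2) ^ 2 := sq_le_sq' lv uv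
      _ = _ := sq (K * h ^ 2)
  have sqp : p ^ 2 ≤ K ^ 2 * h ^ 2 := by
    obtain ⟨lp, up⟩ := abs_le.mp hp
    calc p ^ 2 ≤ (K * h) ^ 2 := sq_le_sq' lp up
      _ = K ^ 2 * h ^ 2 := by ring
  have sqq : q ^ 2 ≤ K ^ 2 * h ^ 2 := by
    obtain ⟨lq, uq⟩ := abs_le.mp hq
    calc q ^ 2 ≤ (K * h) ^ 2 := sq_le_sq' lq uq
      _ = K ^ 2 * h ^ 2 := by ring
  have hab : |(a - 1) * b| ≤ (K * h ^ 2) * (K * h ^ 2) := by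
    rw [abs_mul]; exact mul_le_mul ha hb (abs_nonneg _) hKn
  have huv : |u * (v - 1)| ≤ (K * h ^ 2) * (K * h ^ 2) := by
    rw [abs_mul]; exact mul_le_mul hu hv (abs_nonneg _) hKn
  have hpq : |p * q| ≤ K ^ 2 * h ^ 2 := by
    rw [abs_mul]
    calc |p| * |q| ≤ (K * h) * (K * h) :=
          mul_le_mul hp hq (abs_nonneg _) hKn1
      _ = K ^ 2 * h ^ 2 := by ring
  obtain ⟨lab, uab⟩ := abs_le.mp hab
  obtain ⟨luv, uuv⟩ := abs_le.mp huv
  obtain ⟨lpq, upq⟩ := abs_le.mp hpq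
  have na : (0:ℝ) ≤ (a - 1) ^ 2 := sq_nonneg _
  have nb : (0:ℝ) ≤ b ^ 2 := sq_nonneg _
  have nu : (0:ℝ) ≤ u ^ 2 := sq_nonneg _
  have nv : (0:ℝ) ≤ (v - 1) ^ 2 := sq_nonneg _
  have np : (0:ℝ) ≤ p ^ 2 := sq_nonneg _
  have nq : (0:ℝ) ≤ q ^ 2 := sq_nonneg _
  have nK2 : (0:ℝ) ≤ K ^ 2 * h ^ 2 := by positivity
  refine ⟨?_, ?_, ?_, ?_⟩ <;> rw [abs_le] <;> constructor <;> linarith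

/-- Proposition 3.6(ii), second estimate: metric supercloseness `‖g_Γ − I₂‖_∞ = O(h²)`. -/
theorem metric_supercloseness
    (θ c : ℝ) (hθ : 0 < θ) (hc : 0 ≤ c) :
    ∃ C > (0 : ℝ), ∃ h₀ > (0 : ℝ), h₀ ≤ 1 ∧
      ∀ h : ℝ, 0 < h → h ≤ h₀ →
        ∀ (ξ₁ ξ₂ : EuclideanSpace ℝ (Fin 2)) (ψ₁ ψ₂ : EuclideanSpace ℝ (Fin 3))
          (Γ : Matrix (Fin 3) (Fin 2) ℝ),
          θ * h ≤ ‖ξ₁‖ → ‖ξ₁‖ ≤ h →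
          θ * h ≤ ‖ξ₂‖ → ‖ξ₂‖ ≤ h →
          θ * h ≤ ‖ξ₂ - ξ₁‖ → ‖ξ₂ - ξ₁‖ ≤ h →
          θ * h ^ 2 ≤ |ξ₁ 0 * ξ₂ 1 - ξ₁ 1 * ξ₂ 0| →
          |ψ₁ 0 - ξ₁ 0| ≤ c * h ^ 3 → |ψ₁ 1 - ξ₁ 1| ≤ c * h ^ 3 →
          |ψ₂ 0 - ξ₂ 0| ≤ c * h ^ 3 → |ψ₂ 1 - ξ₂ 1| ≤ c * h ^ 3 →
          |ψ₁ 2| ≤ c * h ^ 2 → |ψ₂ 2| ≤ c * h ^ 2 →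
          Γ.mulVec ξ₁ = ψ₁ → Γ.mulVec ξ₂ = ψ₂ →
          ∀ i j : Fin 2, |(Γᵀ * Γ - (1 : Matrix (Fin 2) (Fin 2) ℝ)) i j| ≤ C * h ^ 2 := by
  have hθ' : θ ≠ 0 := ne_of_gt hθ
  refine ⟨4 * (2 * c / θ) + 3 * (2 * c / θ) ^ 2 + 1, by positivity, 1, one_pos, le_refl 1, ?_⟩
  intro h hh hle ξ₁ ξ₂ ψ₁ ψ₂ Γ _ hn1 _ hn2 _ _ hdet hp10 hp11 hp20 hp21 hz1 hz2 hΓ1 hΓ2 i j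
  set K := 2 * c / θ with hKdef
  have hK0 : 0 ≤ K := by positivity
  have hx10 : |ξ₁ 0| ≤ h := (coord_le_norm2 ξ₁ 0).trans hn1
  have hx11 : |ξ₁ 1| ≤ h := (coord_le_norm2 ξ₁ 1).trans hn1
  have hx20 : |ξ₂ 0| ≤ h := (coord_le_norm2 ξ₂ 0).trans hn2
  have hx21 : |ξ₂ 1| ≤ h := (coord_le_norm2 ξ₂ 1).trans hn2
  have eq1 : ∀ k : Fin 3, Γ k 0 * ξ₁ 0 + Γ k 1 * ξ₁ 1 = ψ₁ k := by
    intro k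
    have hk := congrFun hΓ1 k
    simpa [Matrix.mulVec, dotProduct, Fin.sum_univ_two] using hk
  have eq2 : ∀ k : Fin 3, Γ k 0 * ξ₂ 0 + Γ k 1 * ξ₂ 1 = ψ₂ k := by
    intro k
    have hk := congrFun hΓ2 k
    simpa [Matrix.mulVec, dotProduct, Fin.sum_univ_two] using hk
  have c00 : (Γ 0 0 - 1) * (ξ₁ 0 * ξ₂ 1 - ξ₁ 1 * ξ₂ 0)
      = (ψ₁ 0 - ξ₁ 0) * ξ₂ 1 - (ψ₂ 0 - ξ₂ 0) * ξ₁ 1 := by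
    linear_combination ξ₂ 1 * eq1 0 - ξ₁ 1 * eq2 0
  have c01 : Γ 0 1 * (ξ₁ 0 * ξ₂ 1 - ξ₁ 1 * ξ₂ 0)
      = (ψ₂ 0 - ξ₂ 0) * ξ₁ 0 - (ψ₁ 0 - ξ₁ 0) * ξ₂ 0 := by
    linear_combination ξ₁ 0 * eq2 0 - ξ₂ 0 * eq1 0
  have c10 : Γ 1 0 * (ξ₁ 0 * ξ₂ 1 - ξ₁ 1 * ξ₂ 0)
      = (ψ₁ 1 - ξ₁ 1) * ξ₂ 1 - (ψ₂ 1 - ξ₂ 1) * ξ₁ 1 := by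
    linear_combination ξ₂ 1 * eq1 1 - ξ₁ 1 * eq2 1
  have c11 : (Γ 1 1 - 1) * (ξ₁ 0 * ξ₂ 1 - ξ₁ 1 * ξ₂ 0)
      = (ψ₂ 1 - ξ₂ 1) * ξ₁ 0 - (ψ₁ 1 - ξ₁ 1) * ξ₂ 0 := by
    linear_combination ξ₁ 0 * eq2 1 - ξ₂ 0 * eq1 1
  have c20 : Γ 2 0 * (ξ₁ 0 * ξ₂ 1 - ξ₁ 1 * ξ₂ 0)
      = ψ₁ 2 * ξ₂ 1 - ψ₂ 2 * ξ₁ 1 := by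
    linear_combination ξ₂ 1 * eq1 2 - ξ₁ 1 * eq2 2
  have c21 : Γ 2 1 * (ξ₁ 0 * ξ₂ 1 - ξ₁ 1 * ξ₂ 0)
      = ψ₂ 2 * ξ₁ 0 - ψ₁ 2 * ξ₂ 0 := by
    linear_combination ξ₁ 0 * eq2 2 - ξ₂ 0 * eq1 2
  have hK3 : (c * h ^ 3 + c * h ^ 3) * h ≤ (K * h ^ 2) * (θ * h ^ 2) := by
    refine le_of_eq ?_
    rw [hKdef]
    field_simp
    ring
  have hK2 : (c * h ^ 2 + c * h ^ 2) * h ≤ (K * h) * (θ * h ^ 2) := by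
    refine le_of_eq ?_
    rw [hKdef]
    field_simp
    ring
  have b00 : |Γ 0 0 - 1| ≤ K * h ^ 2 := ebound hθ hh c00 hdet hp10 hp20 hx21 hx11 hK3
  have b01 : |Γ 0 1| ≤ K * h ^ 2 := ebound hθ hh c01 hdet hp20 hp10 hx10 hx20 hK3
  have b10 : |Γ 1 0| ≤ K * h ^ 2 := ebound hθ hh c10 hdet hp11 hp21 hx21 hx11 hK3
  have b11 : |Γ 1 1 - 1| ≤ K * h ^ 2 := ebound hθ hh c11 hdet hp21 hp11 hx10 hx20 hK3
  have b20 : |Γ 2 0| ≤ K * h := ebound hθ hh c20 hdet hz1 hz2 hx21 hx11 hK2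
  have b21 : |Γ 2 1| ≤ K * h := ebound hθ hh c21 hdet hz2 hz1 hx10 hx20 hK2
  have hh2 : h ^ 2 ≤ 1 := by
    have := mul_le_one₀ hle (le_of_lt hh) hle
    calc h ^ 2 = h * h := sq h
      _ ≤ 1 := this
  obtain ⟨Q1, Q2, Q3, Q4⟩ := quadbound hK0 hh hh2 b00 b01 b10 b11 b20 b21
  have E00 : (Γᵀ * Γ - (1 : Matrix (Fin 2) (Fin 2) ℝ)) 0 0
      = Γ 0 0 * Γ 0 0 + Γ 1 0 * Γ 1 0 + Γ 2 0 * Γ 2 0 - 1 := by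
    simp [Matrix.mul_apply, Matrix.sub_apply, Matrix.one_apply, Fin.sum_univ_three]
  have E01 : (Γᵀ * Γ - (1 : Matrix (Fin 2) (Fin 2) ℝ)) 0 1
      = Γ 0 0 * Γ 0 1 + Γ 1 0 * Γ 1 1 + Γ 2 0 * Γ 2 1 := by
    simp [Matrix.mul_apply, Matrix.sub_apply, Matrix.one_apply, Fin.sum_univ_three]
  have E10 : (Γᵀ * Γ - (1 : Matrix (Fin 2) (Fin 2) ℝ)) 1 0
      = Γ 0 1 * Γ 0 0 + Γ 1 1 * Γ 1 0 + Γ 2 1 * Γ 2 0 := by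
    simp [Matrix.mul_apply, Matrix.sub_apply, Matrix.one_apply, Fin.sum_univ_three]
  have E11 : (Γᵀ * Γ - (1 : Matrix (Fin 2) (Fin 2) ℝ)) 1 1
      = Γ 0 1 * Γ 0 1 + Γ 1 1 * Γ 1 1 + Γ 2 1 * Γ 2 1 - 1 := by
    simp [Matrix.mul_apply, Matrix.sub_apply, Matrix.one_apply, Fin.sum_univ_three]
  fin_cases i <;> fin_cases j
  · show |(Γᵀ * Γ - (1 : Matrix (Fin 2) (Fin 2) ℝ)) 0 0| ≤ _
    rw [E00]; exact Q1
  · show |(Γᵀ * Γ - (1 : Matrix (Fin 2) (Fin 2) ℝ)) 0 1| ≤ _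
    rw [E01]; exact Q2
  · show |(Γᵀ * Γ - (1 : Matrix (Fin 2) (Fin 2) ℝ)) 1 0| ≤ _
    rw [E10]; exact Q3
  · show |(Γᵀ * Γ - (1 : Matrix (Fin 2) (Fin 2) ℝ)) 1 1| ≤ _
    rw [E11]; exact Q4
end

section
/- Let θ > 0 and c ≥ 0. There exist constants C > 0 and h₀ ∈ (0,1], depending only on θ and c, such that for every h ∈ (0, h₀] the following holds: let ξ₁, ξ₂ ∈ ℝ² span a triangle with vertices 0, ξ₁, ξ₂ all of whose side lengths lie in [θh, h] and with |det(ξ₁, ξ₂)| ≥ θh², and let ψ₁, ψ₂ ∈ ℝ³ satisfy |ψᵢ(j) − ξᵢ(j)| ≤ c h³ for j = 1, 2 and additionally |ψᵢ(3)| ≤ c h³ for i = 1, 2. Let Γ be the unique real 3×2 matrix with Γ ξᵢ = ψᵢ for i = 1, 2. Then ‖Γ − Id‖_∞ ≤ C h², where Id denotes the 3×2 matrix whose upper 2×2 block is the identity and whose last row is zero, and ‖·‖_∞ is the maximum absolute value of the matrix entries. -/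
open Matrix

/-!
Every column `ξₖ` is sent by `Γ - Id32` to the deviation `ψₖ - (ξₖ, 0)`, which is `O(h³)` in all
three coordinates; the normal bound is what makes the third one small too. Cramer's rule
expresses each entry of `Γ - Id32` as a combination of two deviations times coordinates of the
`ξₖ` (so `O(h⁴)`), divided by `det(ξ₁, ξ₂)`, which is at least `θh²`.
-/

theorem abs_le_of_mul_eq_sub {x D p q u v ε h δ : ℝ} (hδ : 0 < δ) (hD : δ ≤ |D|)
    (hx : x * D = p * u - q * v) (hp : |p| ≤ ε) (hq : |q| ≤ ε) (hu : |u| ≤ h) (hv : |v| ≤ h) :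
    |x| ≤ 2 * ε * h / δ := by
  have hε : 0 ≤ ε := (abs_nonneg p).trans hp
  rw [le_div_iff₀ hδ]
  calc |x| * δ ≤ |x| * |D| := mul_le_mul_of_nonneg_left hD (abs_nonneg x)
    _ = |p * u - q * v| := by rw [← abs_mul, hx]
    _ ≤ |p| * |u| + |q| * |v| := by rw [← abs_mul, ← abs_mul]; exact abs_sub _ _
    _ ≤ ε * h + ε * h := by gcongr
    _ = 2 * ε * h := by ring

section Cramer

variable {m : Type*} (A : Matrix m (Fin 2) ℝ) (ξ₁ ξ₂ : Fin 2 → ℝ) (i : m)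

theorem apply_zero_mul_det_eq_mulVec :
    A i 0 * (ξ₁ 0 * ξ₂ 1 - ξ₁ 1 * ξ₂ 0) = (A *ᵥ ξ₁) i * ξ₂ 1 - (A *ᵥ ξ₂) i * ξ₁ 1 := by
  simp only [mulVec, dotProduct, Fin.sum_univ_two]
  ring

theorem apply_one_mul_det_eq_mulVec :
    A i 1 * (ξ₁ 0 * ξ₂ 1 - ξ₁ 1 * ξ₂ 0) = (A *ᵥ ξ₂) i * ξ₁ 0 - (A *ᵥ ξ₁) i * ξ₂ 0 := by
  simp only [mulVec, dotProduct, Fin.sum_univ_two]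
  ring

theorem abs_apply_le_of_abs_mulVec_le {ε h δ : ℝ} (hδ : 0 < δ)
    (hdet : δ ≤ |ξ₁ 0 * ξ₂ 1 - ξ₁ 1 * ξ₂ 0|) (hξ₁ : ∀ j, |ξ₁ j| ≤ h) (hξ₂ : ∀ j, |ξ₂ j| ≤ h)
    (hA₁ : |(A *ᵥ ξ₁) i| ≤ ε) (hA₂ : |(A *ᵥ ξ₂) i| ≤ ε) (j : Fin 2) :
    |A i j| ≤ 2 * ε * h / δ := by
  fin_cases j
  · exact abs_le_of_mul_eq_sub hδ hdet (apply_zero_mul_det_eq_mulVec A ξ₁ ξ₂ i) hA₁ hA₂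
      (hξ₂ 1) (hξ₁ 1)
  · exact abs_le_of_mul_eq_sub hδ hdet (apply_one_mul_det_eq_mulVec A ξ₁ ξ₂ i) hA₂ hA₁
      (hξ₁ 0) (hξ₂ 0)

end Cramer

theorem abs_sub_Id32_mulVec_le {ξ : Fin 2 → ℝ} {ψ : Fin 3 → ℝ} {ε : ℝ}
    (h₀ : |ψ 0 - ξ 0| ≤ ε) (h₁ : |ψ 1 - ξ 1| ≤ ε) (h₂ : |ψ 2| ≤ ε) (i : Fin 3) :
    |(ψ - Id32 *ᵥ ξ) i| ≤ ε := by
  fin_cases i <;> simpa [Id32, mulVec, dotProduct, Fin.sum_univ_two]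

/-- Proposition 3.6(iii): improved Jacobian supercloseness `‖Γ − Id‖_∞ = O(h²)`
under the additional `O(h³)` normal deviation condition. -/
theorem jacobian_supercloseness
    (θ c : ℝ) (hθ : 0 < θ) (hc : 0 ≤ c) :
    ∃ C > (0 : ℝ), ∃ h₀ > (0 : ℝ), h₀ ≤ 1 ∧
      ∀ h : ℝ, 0 < h → h ≤ h₀ →
        ∀ (ξ₁ ξ₂ : EuclideanSpace ℝ (Fin 2)) (ψ₁ ψ₂ : EuclideanSpace ℝ (Fin 3))
          (Γ : Matrix (Fin 3) (Fin 2) ℝ),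
          θ * h ≤ ‖ξ₁‖ → ‖ξ₁‖ ≤ h →
          θ * h ≤ ‖ξ₂‖ → ‖ξ₂‖ ≤ h →
          θ * h ≤ ‖ξ₂ - ξ₁‖ → ‖ξ₂ - ξ₁‖ ≤ h →
          θ * h ^ 2 ≤ |ξ₁ 0 * ξ₂ 1 - ξ₁ 1 * ξ₂ 0| →
          |ψ₁ 0 - ξ₁ 0| ≤ c * h ^ 3 → |ψ₁ 1 - ξ₁ 1| ≤ c * h ^ 3 →
          |ψ₂ 0 - ξ₂ 0| ≤ c * h ^ 3 → |ψ₂ 1 - ξ₂ 1| ≤ c * h ^ 3 →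
          |ψ₁ 2| ≤ c * h ^ 3 → |ψ₂ 2| ≤ c * h ^ 3 →
          Γ.mulVec ξ₁ = ψ₁ → Γ.mulVec ξ₂ = ψ₂ →
          ∀ (i : Fin 3) (j : Fin 2), |(Γ - Id32) i j| ≤ C * h ^ 2 := by
  refine ⟨2 * c / θ + 1, by positivity, 1, one_pos, le_rfl, ?_⟩
  intro h hh _ ξ₁ ξ₂ ψ₁ ψ₂ Γ _ hξ₁ _ hξ₂ _ _ hdet h₁₀ h₁₁ h₂₀ h₂₁ h₁₂ h₂₂ hΓ₁ hΓ₂ i j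
  have hcoord {n : ℕ} {ξ : EuclideanSpace ℝ (Fin n)} (hξ : ‖ξ‖ ≤ h) (k : Fin n) : |ξ k| ≤ h :=
    (PiLp.norm_apply_le ξ k).trans hξ
  have hdev₁ : |((Γ - Id32) *ᵥ ξ₁) i| ≤ c * h ^ 3 := by
    rw [sub_mulVec, hΓ₁]; exact abs_sub_Id32_mulVec_le h₁₀ h₁₁ h₁₂ i
  have hdev₂ : |((Γ - Id32) *ᵥ ξ₂) i| ≤ c * h ^ 3 := by
    rw [sub_mulVec, hΓ₂]; exact abs_sub_Id32_mulVec_le h₂₀ h₂₁ h₂₂ i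
  calc |(Γ - Id32) i j| ≤ 2 * (c * h ^ 3) * h / (θ * h ^ 2) :=
        abs_apply_le_of_abs_mulVec_le _ _ _ i (by positivity) hdet (hcoord hξ₁) (hcoord hξ₂)
          hdev₁ hdev₂ j
    _ = 2 * c / θ * h ^ 2 := by field_simp
    _ ≤ (2 * c / θ + 1) * h ^ 2 := by gcongr; linarith
end
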